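/- arXiv:2602.04382 — 4 statements merged into one kernel-verified Lean document; each statement's English description precedes it below -/
import Mathlib

section
/- In the braid group B_{2n+2} with Artin generators σ_1, ..., σ_{2n+1}, for all integers k ≥ 0 and n ≥ 1 with 2n - k - 1 ≥ 0, the element (σ_{2n}^{-1}σ_{2n-1}^{-1}⋯σ_1^{-1})^{2n+1}(σ_1σ_2⋯σ_{2n+1})^{2n} equals (σ_{2n}^{-1}σ_{2n-1}^{-1}⋯σ_1^{-1})^{2n-k} σ_{2n+1}σ_{2n}⋯σ_{2n+1-k} (σ_1σ_2⋯σ_{2n+1})^{2n-k-1}. -/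
/-- Braid relations on `k` generators (so this presents the braid group `B_{k+1}`).
Generator `i : Fin k` corresponds to the Artin generator `σ_{i+1}`. -/
def braidRels (k : ℕ) : Set (FreeGroup (Fin k)) :=
  {w | ∃ i j : Fin k, (i : ℕ) + 2 ≤ (j : ℕ) ∧
      w = FreeGroup.of i * FreeGroup.of j * (FreeGroup.of i)⁻¹ * (FreeGroup.of j)⁻¹} ∪
  {w | ∃ i j : Fin k, (i : ℕ) + 1 = (j : ℕ) ∧
      w = FreeGroup.of i * FreeGroup.of j * FreeGroup.of i *
        (FreeGroup.of j * FreeGroup.of i * FreeGroup.of j)⁻¹}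

/-- The braid group on `k + 1` strands, presented with `k` Artin generators. -/
abbrev BraidGroup (k : ℕ) : Type := PresentedGroup (braidRels k)

/-- The Artin generator `σ_i` (for `1 ≤ i ≤ k`) of the braid group on `k+1` strands. -/
def braidGen (k i : ℕ) : BraidGroup k :=
  if h : 1 ≤ i ∧ i ≤ k then PresentedGroup.of (⟨i - 1, by omega⟩ : Fin k) else 1

/-- The ascending word `σ_a σ_{a+1} ⋯ σ_b`. -/
def asc (k a b : ℕ) : BraidGroup k :=
  ((List.range' a (b + 1 - a)).map (braidGen k)).prod

/-- The descending word `σ_b σ_{b-1} ⋯ σ_a`. -/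
def descP (k a b : ℕ) : BraidGroup k :=
  (((List.range' a (b + 1 - a)).map (braidGen k)).reverse).prod

/-- The descending word of inverses `σ_b⁻¹ σ_{b-1}⁻¹ ⋯ σ_a⁻¹`. -/
def descInv (k a b : ℕ) : BraidGroup k :=
  (((List.range' a (b + 1 - a)).map (fun i => (braidGen k i)⁻¹)).reverse).prod

/- ## Auxiliary lemmas -/

lemma braidRel_one {k : ℕ} {r : FreeGroup (Fin k)} (h : r ∈ braidRels k) :
    PresentedGroup.mk (braidRels k) r = 1 :=
  (QuotientGroup.eq_one_iff _).mpr (Subgroup.subset_normalClosure h)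

/-- Far-apart generators commute. -/
lemma gen_comm' {k i j : ℕ} (h1 : 1 ≤ i) (h2 : i + 2 ≤ j) : Commute (braidGen k i) (braidGen k j) := by
  by_cases hj : j ≤ k
  · have hi : 1 ≤ i ∧ i ≤ k := ⟨h1, by omega⟩
    have hj' : 1 ≤ j ∧ j ≤ k := ⟨by omega, hj⟩
    rw [braidGen, braidGen, dif_pos hi, dif_pos hj']
    have h := braidRel_one (k := k) (Or.inl ⟨⟨i - 1, by omega⟩, ⟨j - 1, by omega⟩,
      by simp only []; omega, rfl⟩)
    simp only [map_mul, map_inv] at h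
    have h' := mul_inv_eq_iff_eq_mul.mp (mul_inv_eq_one.mp h)
    exact h'
  · have e : braidGen k j = 1 := dif_neg (by omega)
    rw [e]; exact Commute.one_right _

lemma gen_comm {k i j : ℕ} (h : i + 2 ≤ j ∨ j + 2 ≤ i) :
    Commute (braidGen k i) (braidGen k j) := by
  rcases h with h | h
  · by_cases h1 : 1 ≤ i
    · exact gen_comm' h1 h
    · have e : braidGen k i = 1 := dif_neg (by omega)
      rw [e]; exact Commute.one_left _
  · by_cases h1 : 1 ≤ j
    · exact (gen_comm' h1 h).symm
    · have e : braidGen k j = 1 := dif_neg (by omega)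
      rw [e]; exact Commute.one_right _

/-- The braid relation. -/
lemma gen_braid {k i : ℕ} (h1 : 1 ≤ i) (h2 : i + 1 ≤ k) :
    braidGen k i * braidGen k (i+1) * braidGen k i
      = braidGen k (i+1) * braidGen k i * braidGen k (i+1) := by
  have hi : 1 ≤ i ∧ i ≤ k := ⟨h1, by omega⟩
  have hj : 1 ≤ i + 1 ∧ i + 1 ≤ k := ⟨by omega, h2⟩
  rw [braidGen, braidGen, dif_pos hi, dif_pos hj]
  have h := braidRel_one (k := k) (Or.inr ⟨⟨i - 1, by omega⟩, ⟨i + 1 - 1, by omega⟩,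
    by simp only []; omega, rfl⟩)
  simp only [map_mul, map_inv] at h
  exact mul_inv_eq_one.mp h

lemma descInv_eq (k a b : ℕ) : descInv k a b = (asc k a b)⁻¹ := by
  rw [descInv, asc, List.prod_inv_reverse, List.map_map]
  rfl

lemma range'_split (a c b : ℕ) (h1 : a ≤ c + 1) (h2 : c ≤ b) :
    List.range' a (b + 1 - a) = List.range' a (c + 1 - a) ++ List.range' (c+1) (b + 1 - (c+1)) := by
  rw [show b + 1 - a = (c + 1 - a) + (b - c) by omega, ← List.range'_append_1]
  rw [show a + (c + 1 - a) = c + 1 by omega, show b - c = b + 1 - (c + 1) by omega]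

lemma asc_single (k a : ℕ) : asc k a a = braidGen k a := by
  simp [asc, List.range']

lemma descP_single (k a : ℕ) : descP k a a = braidGen k a := by
  have : a + 1 - a = 1 := by omega
  simp [descP, this, List.range']

lemma asc_split (k a c b : ℕ) (h1 : a ≤ c + 1) (h2 : c ≤ b) :
    asc k a b = asc k a c * asc k (c+1) b := by
  rw [asc, asc, asc, range'_split a c b h1 h2, List.map_append, List.prod_append]

lemma descP_split (k a c b : ℕ) (h1 : a ≤ c + 1) (h2 : c ≤ b) :
    descP k a b = descP k (c+1) b * descP k a c := by
  rw [descP, descP, descP, range'_split a c b h1 h2, List.map_append, List.reverse_append,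
    List.prod_append]

lemma asc_pop (k a b : ℕ) (h : a ≤ b) (hb : 1 ≤ b) :
    asc k a b = asc k a (b-1) * braidGen k b := by
  have : b = (b - 1) + 1 := by omega
  rw [asc_split k a (b-1) b (by omega) (by omega), ← this, asc_single]

lemma descP_pop (k a b : ℕ) (h : a ≤ b) (hb : 1 ≤ b) :
    descP k a b = braidGen k b * descP k a (b-1) := by
  have : b = (b - 1) + 1 := by omega
  rw [descP_split k a (b-1) b (by omega) (by omega), ← this, descP_single]

lemma asc_empty (k a b : ℕ) (h : b + 1 ≤ a) : asc k a b = 1 := by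
  have : b + 1 - a = 0 := by omega
  simp [asc, this]

/-- A generator far above commutes with an ascending word. -/
lemma commute_gen_asc {k j a b : ℕ} (h : b + 2 ≤ j) :
    Commute (braidGen k j) (asc k a b) := by
  rw [asc]
  apply Commute.list_prod_right
  intro x hx
  simp only [List.mem_map] at hx
  obtain ⟨i, hi, rfl⟩ := hx
  rw [List.mem_range'_1] at hi
  exact (gen_comm (Or.inl (by omega))).symm

lemma commute_gen_descP {k j a b : ℕ} (h : b + 2 ≤ j) :
    Commute (braidGen k j) (descP k a b) := by
  rw [descP]
  apply Commute.list_prod_right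
  intro x hx
  simp only [List.mem_reverse, List.mem_map] at hx
  obtain ⟨i, hi, rfl⟩ := hx
  rw [List.mem_range'_1] at hi
  exact (gen_comm (Or.inl (by omega))).symm

/-- An ascending word far below commutes with a descending word. -/
lemma commute_asc_descP {k a b c d : ℕ} (h : b + 2 ≤ c) :
    Commute (asc k a b) (descP k c d) := by
  rw [descP]
  apply Commute.list_prod_right
  intro x hx
  simp only [List.mem_reverse, List.mem_map] at hx
  obtain ⟨i, hi, rfl⟩ := hx
  rw [List.mem_range'_1] at hi
  exact (commute_gen_asc (k := k) (j := i) (a := a) (by omega)).symm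

/-- Key braid word identity: `(σ_t⋯σ_{a+1})(σ_a⋯σ_t) = (σ_a⋯σ_{t-1})(σ_t⋯σ_a)`. -/
lemma key_identity (k a : ℕ) (ha : 1 ≤ a) :
    ∀ t, a + 1 ≤ t → t ≤ k →
    descP k (a+1) t * asc k a t = asc k a (t-1) * descP k a t := by
  intro t
  induction t with
  | zero => omega
  | succ t ih =>
    intro hat htk
    rcases Nat.lt_or_ge (a+1) (t+1) with hlt | hge
    · -- inductive step: t ≥ a+1
      have h1 : a + 1 ≤ t := by omega
      have h2 : t ≤ k := by omega
      have IH := ih h1 h2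
      have e1 : descP k (a+1) (t+1) = braidGen k (t+1) * descP k (a+1) t :=
        descP_pop k (a+1) (t+1) (by omega) (by omega)
      have e2 : asc k a (t+1) = asc k a t * braidGen k (t+1) :=
        by simpa using asc_pop k a (t+1) (by omega) (by omega)
      rw [e1, e2]
      have e3 : descP k a t = braidGen k t * descP k a (t-1) :=
        descP_pop k a t (by omega) (by omega)
      have e4 : descP k a (t+1) = braidGen k (t+1) * descP k a t := by
        simpa using descP_pop k a (t+1) (by omega) (by omega)
      have e5 : asc k a t = asc k a (t-1) * braidGen k t :=
        asc_pop k a t (by omega) (by omega)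
      have c1 := (commute_gen_asc (k := k) (j := t+1) (a := a) (b := t-1) (by omega)).eq
      have c2 := (commute_gen_descP (k := k) (j := t+1) (a := a) (b := t-1) (by omega)).eq
      calc braidGen k (t+1) * descP k (a+1) t * (asc k a t * braidGen k (t+1))
          = braidGen k (t+1) * (descP k (a+1) t * asc k a t) * braidGen k (t+1) := by
            group
        _ = braidGen k (t+1) * (asc k a (t-1) * descP k a t) * braidGen k (t+1) := by rw [IH]
        _ = (braidGen k (t+1) * asc k a (t-1)) * (braidGen k t *
              (descP k a (t-1) * braidGen k (t+1))) := by rw [e3]; group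
        _ = (asc k a (t-1) * braidGen k (t+1)) * (braidGen k t *
              (braidGen k (t+1) * descP k a (t-1))) := by rw [c1, ← c2]
        _ = asc k a (t-1) * (braidGen k (t+1) * braidGen k t * braidGen k (t+1))
              * descP k a (t-1) := by group
        _ = asc k a (t-1) * (braidGen k t * braidGen k (t+1) * braidGen k t)
              * descP k a (t-1) := by rw [gen_braid (by omega) (by omega)]
        _ = (asc k a (t-1) * braidGen k t) * (braidGen k (t+1)
              * (braidGen k t * descP k a (t-1))) := by group
        _ = asc k a t * (braidGen k (t+1) * descP k a t) := by rw [← e3, ← e5]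
        _ = asc k a ((t+1)-1) * descP k a (t+1) := by
            rw [← e4, show t + 1 - 1 = t by omega]
    · -- base case: t + 1 = a + 1
      have heq : t = a := by omega
      subst heq
      have e : asc k t (t+1) = asc k t t * braidGen k (t+1) := by
        simpa using asc_pop k t (t+1) (by omega) (by omega)
      have e' : descP k t (t+1) = braidGen k (t+1) * descP k t t := by
        simpa using descP_pop k t (t+1) (by omega) (by omega)
      rw [descP_single, e, e', descP_single, asc_single,
        show t + 1 - 1 = t by omega, asc_single]
      simpa [mul_assoc] using (gen_braid (show 1 ≤ t from ha) (show t + 1 ≤ k by omega)).symm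

/-- The conjugation step:
`(σ_1⋯σ_{2n})⁻¹ (σ_{2n+1}⋯σ_m) (σ_1⋯σ_{2n+1}) = σ_{2n+1}⋯σ_{m-1}`. -/
lemma conj_step (n m : ℕ) (hm2 : 2 ≤ m) (hm : m ≤ 2*n+1) :
    (asc (2*n+1) 1 (2*n))⁻¹ * descP (2*n+1) m (2*n+1) * asc (2*n+1) 1 (2*n+1)
      = descP (2*n+1) (m-1) (2*n+1) := by
  set k := 2*n+1 with hk
  have hm1 : m - 1 + 1 = m := by omega
  have e1 : asc k 1 (2*n) = asc k 1 (m-2) * asc k (m-1) (2*n) := by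
    have := asc_split k 1 (m-2) (2*n) (by omega) (by omega)
    rwa [show m - 2 + 1 = m - 1 by omega] at this
  have e2 : asc k 1 (2*n+1) = asc k 1 (m-2) * asc k (m-1) (2*n+1) := by
    have := asc_split k 1 (m-2) (2*n+1) (by omega) (by omega)
    rwa [show m - 2 + 1 = m - 1 by omega] at this
  have hcomm : Commute (asc k 1 (m-2)) (descP k m (2*n+1)) :=
    commute_asc_descP (by omega)
  have hkey : descP k m (2*n+1) * asc k (m-1) (2*n+1)
      = asc k (m-1) (2*n) * descP k (m-1) (2*n+1) := by
    have := key_identity k (m-1) (by omega) (2*n+1) (by omega) (by omega)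
    rwa [hm1, show 2*n+1-1 = 2*n by omega] at this
  calc (asc k 1 (2*n))⁻¹ * descP k m (2*n+1) * asc k 1 (2*n+1)
      = (asc k (m-1) (2*n))⁻¹ * ((asc k 1 (m-2))⁻¹ * descP k m (2*n+1) * asc k 1 (m-2))
          * asc k (m-1) (2*n+1) := by rw [e1, e2]; group
    _ = (asc k (m-1) (2*n))⁻¹ * descP k m (2*n+1) * asc k (m-1) (2*n+1) := by
        rw [(hcomm.inv_left).eq]; group
    _ = (asc k (m-1) (2*n))⁻¹ * (asc k (m-1) (2*n) * descP k (m-1) (2*n+1)) := by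
        rw [mul_assoc, hkey]
    _ = descP k (m-1) (2*n+1) := by group

/-- In the braid group `B_{2n+2}` (with `2n+1` Artin generators), for all `k ≥ 0`, `n ≥ 1`
with `2n - k - 1 ≥ 0`:
`(σ_{2n}⁻¹⋯σ_1⁻¹)^{2n+1} (σ_1⋯σ_{2n+1})^{2n}
  = (σ_{2n}⁻¹⋯σ_1⁻¹)^{2n-k} σ_{2n+1}σ_{2n}⋯σ_{2n+1-k} (σ_1⋯σ_{2n+1})^{2n-k-1}`. -/
theorem braid_reduction_formula (n k : ℕ) (hn : 1 ≤ n) (hk : k + 1 ≤ 2 * n) :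
    (descInv (2*n+1) 1 (2*n)) ^ (2*n+1) * (asc (2*n+1) 1 (2*n+1)) ^ (2*n) =
      (descInv (2*n+1) 1 (2*n)) ^ (2*n - k) * descP (2*n+1) (2*n+1-k) (2*n+1) *
        (asc (2*n+1) 1 (2*n+1)) ^ (2*n - k - 1) := by
  induction k with
  | zero =>
    rw [descInv_eq]
    set K := 2*n+1
    set B := asc K 1 (2*n) with hB
    set A := asc K 1 (2*n+1) with hA
    have hDA : B⁻¹ * A = braidGen K (2*n+1) := by
      rw [hA, asc_split K 1 (2*n) (2*n+1) (by omega) (by omega), asc_single, ← hB]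
      group
    have h1 : 2*n - 0 = 2*n := by omega
    have h2 : 2*n + 1 - 0 = 2*n+1 := by omega
    rw [h1, h2, descP_single]
    have h3 : 2*n = (2*n - 1) + 1 := by omega
    calc (B⁻¹) ^ (2*n+1) * A ^ (2*n)
        = (B⁻¹) ^ (2*n) * (B⁻¹ * A) * A ^ (2*n - 1) := by
          rw [pow_succ]
          nth_rewrite 2 [h3]
          rw [pow_succ']
          group
      _ = (B⁻¹) ^ (2*n) * braidGen K (2*n+1) * A ^ (2*n - 1) := by rw [hDA]
  | succ k ih =>
    have hk' : k + 1 ≤ 2 * n := by omega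
    rw [ih hk', descInv_eq]
    have hstep := conj_step n (2*n+1-k) (by omega) (by omega)
    rw [show 2*n+1-k-1 = 2*n+1-(k+1) by omega] at hstep
    have h2 : 2*n - k - 1 = (2*n - (k+1) - 1) + 1 := by omega
    have h1 : 2*n - k = (2*n - (k+1)) + 1 := by omega
    rw [h2, h1, pow_succ, pow_succ']
    calc (asc (2*n+1) 1 (2*n))⁻¹ ^ (2*n-(k+1)) * (asc (2*n+1) 1 (2*n))⁻¹
            * descP (2*n+1) (2*n+1-k) (2*n+1)
            * (asc (2*n+1) 1 (2*n+1) * asc (2*n+1) 1 (2*n+1) ^ (2*n-(k+1)-1))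
        = (asc (2*n+1) 1 (2*n))⁻¹ ^ (2*n-(k+1))
            * ((asc (2*n+1) 1 (2*n))⁻¹ * descP (2*n+1) (2*n+1-k) (2*n+1)
                * asc (2*n+1) 1 (2*n+1))
            * asc (2*n+1) 1 (2*n+1) ^ (2*n-(k+1)-1) := by group
      _ = (asc (2*n+1) 1 (2*n))⁻¹ ^ (2*n-(k+1)) * descP (2*n+1) (2*n+1-(k+1)) (2*n+1)
            * asc (2*n+1) 1 (2*n+1) ^ (2*n-(k+1)-1) := by rw [hstep]
end

section
/- Let p, q, r, s be integers with p > 0, s < 0, r even with r ≥ 4, gcd(p,q) = 2, and p·q = -r²·s. Write p' = p/2, q' = q/2, r' = r/2, so that p'·q' = -r'²·s. If (p', q', r', s) satisfies one of the seven conditions in Lee's unknot classification, then (p', q', r', s) = (4, 1, 2, -1), and hence (p, q, r, s) = (8, 2, 4, -1). -/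
/-!
Outside family (4), the defect `P * Q + R ^ 2 * S` of a Lee family never vanishes: it is
`-(n + 1)`, `n`, `±n`, `±n` and `-1` in families (1), (2), (3), (5), (6), and `±1` in the
Fibonacci family (7) by Cassini's identity. In family (4) it is `n - 4`.
-/

/-- Lee's seven families of parameters of unknotted twisted torus knots. -/
def LeeFamily (P Q R S : ℤ) : Prop :=
  (∃ n : ℤ, 1 ≤ n ∧ (P, Q, R, S) = (n+1, n, n+1, -1)) ∨
  (∃ n : ℤ, 2 ≤ n ∧ (P, Q, R, S) = (n+1, n, n, -1)) ∨
  (∃ m n : ℤ, 2 ≤ m ∧ 2 ≤ n ∧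
    ((P, Q, R, S) = (m*n+1, n, n, -m) ∨ (P, Q, R, S) = (m*n-1, n, n, -m))) ∨
  (∃ n : ℤ, 3 ≤ n ∧ (P, Q, R, S) = (n, 1, 2, -1)) ∨
  (∃ n : ℤ, 2 ≤ n ∧
    ((P, Q, R, S) = (4*n+1, n, 2*n, -1) ∨ (P, Q, R, S) = (4*n-1, n, 2*n, -1))) ∨
  (∃ n : ℤ, 4 ≤ n ∧ Even n ∧ (P, Q, R, S) = (n+1, n-1, n, -1)) ∨
  (∃ n : ℕ, 4 ≤ n ∧ (P, Q, R, S) = ((Nat.fib (n+1) : ℤ), (Nat.fib (n-1) : ℤ), (Nat.fib n : ℤ), -1))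

theorem Nat.fib_succ_mul_fib_pred_sub_fib_sq {n : ℕ} (hn : 1 ≤ n) :
    (Nat.fib (n + 1) * Nat.fib (n - 1) : ℤ) - Nat.fib n ^ 2 = (-1) ^ n := by
  have h := Int.fib_succ_mul_fib_pred_sub_fib_sq n
  rwa [← Nat.cast_one, ← Nat.cast_add, ← Nat.cast_sub hn, Int.fib_natCast, Int.fib_natCast,
    Int.fib_natCast, Int.natAbs_natCast] at h

theorem LeeFamily.eq_of_mul_eq_neg_sq_mul {P Q R S : ℤ} (hLee : LeeFamily P Q R S)
    (h : P * Q = -(R ^ 2 * S)) : (P, Q, R, S) = (4, 1, 2, -1) := by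
  rcases hLee with ⟨n, hn, he⟩ | ⟨n, hn, he⟩ | ⟨m, n, hm, hn, he | he⟩ | ⟨n, hn, he⟩ |
      ⟨n, hn, he | he⟩ | ⟨n, hn, -, he⟩ | ⟨n, hn, he⟩ <;>
    simp only [Prod.mk.injEq] at he <;> obtain ⟨rfl, rfl, rfl, rfl⟩ := he
  · nlinarith
  · nlinarith
  · nlinarith
  · nlinarith
  · obtain rfl : P = 4 := by linarith
    rfl
  · nlinarith
  · nlinarith
  · nlinarith
  · have hcassini := Nat.fib_succ_mul_fib_pred_sub_fib_sq (n := n) (by omega)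
    rcases neg_one_pow_eq_or ℤ n with hsign | hsign <;> linarith

theorem case_r_even_general (p q r s p' q' r' : ℤ)
    (hp' : p = 2 * p') (hq' : q = 2 * q') (hr' : r = 2 * r')
    (hpq' : p' * q' = -(r'^2 * s))
    (hLee : LeeFamily p' q' r' s) :
    (p', q', r', s) = ((4 : ℤ), 1, 2, -1) ∧ (p, q, r, s) = ((8 : ℤ), 2, 4, -1) := by
  have h := hLee.eq_of_mul_eq_neg_sq_mul hpq'
  simp only [Prod.mk.injEq] at h
  obtain ⟨rfl, rfl, rfl, rfl⟩ := h
  subst hp' hq' hr'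
  norm_num

/-- Case 1 (r even, r ≥ 4) of Proposition 3.2: the constraints force
`(p', q', r', s) = (4, 1, 2, -1)`, hence `(p, q, r, s) = (8, 2, 4, -1)`. -/
theorem case_r_even (p q r s p' q' r' : ℤ) (hp : 0 < p) (hs : s < 0)
    (hre : Even r) (hr4 : 4 ≤ r) (hgcd : Int.gcd p q = 2)
    (hpq : p * q = -(r^2 * s))
    (hp' : p = 2 * p') (hq' : q = 2 * q') (hr' : r = 2 * r')
    (hpq' : p' * q' = -(r'^2 * s))
    (hLee : LeeFamily p' q' r' s) :
    (p', q', r', s) = ((4 : ℤ), 1, 2, -1) ∧ (p, q, r, s) = ((8 : ℤ), 2, 4, -1) :=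
  case_r_even_general p q r s p' q' r' hp' hq' hr' hpq' hLee
end

section
/- Let n ≥ 2 and s be a nonzero integer. If the quadruple (p, q, R, s) with R an integer satisfies both: (i) (p, q, R, s) belongs to one of the seven families in Lee's unknot classification, and (ii) (p, q, R+1, s) also belongs to one of the seven families, then s = -1 and there exists N ≥ 2 with (p, q, R, s) = (N+1, N, N, -1) and (p, q, R+1, s) = (N+1, N, N+1, -1). -/
/-!
Off the line `P = Q + 1`, the third parameter of a member of Lee's families is determined by
`(P, Q, S)`: comparing the linear relations each family imposes (with the Fibonacci family
replaced by `P = R + Q`, `Q < R ≤ 2Q`), no two members differ only in `R`. On that line only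
families (1)-(3) occur, so `R ∈ {Q, Q + 1}`, and consecutive values force `R = Q`, with `S = -1`
coming from family (1).
-/

lemma Nat.fib_succ_le_two_mul {n : ℕ} (hn : 1 ≤ n) : fib (n + 1) ≤ 2 * fib n := by
  obtain ⟨k, rfl⟩ : ∃ k, n = k + 1 := ⟨n - 1, by omega⟩
  calc fib (k + 2) = fib k + fib (k + 1) := fib_add_two
    _ ≤ 2 * fib (k + 1) := by have : fib k ≤ fib (k + 1) := fib_le_fib_succ; omega

namespace LeeFamily

lemma cases_linear {P Q R S : ℤ} (h : LeeFamily P Q R S) :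
    (S = -1 ∧ P = Q + 1 ∧ R = Q + 1) ∨
    (S = -1 ∧ P = Q + 1 ∧ R = Q ∧ 2 ≤ Q) ∨
    (S ≤ -2 ∧ R = Q ∧ 2 ≤ Q) ∨
    (S = -1 ∧ Q = 1 ∧ R = 2 ∧ 3 ≤ P) ∨
    (S = -1 ∧ R = 2 * Q ∧ 2 ≤ Q ∧ (P = 4 * Q + 1 ∨ P = 4 * Q - 1)) ∨
    (S = -1 ∧ P = Q + 2 ∧ R = Q + 1 ∧ 3 ≤ Q) ∨
    (S = -1 ∧ P = R + Q ∧ 2 ≤ Q ∧ Q < R ∧ R ≤ 2 * Q) := by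
  rcases h with ⟨n, hn, he⟩ | ⟨n, hn, he⟩ | ⟨m, n, hm, hn, he | he⟩ | ⟨n, hn, he⟩ |
      ⟨n, hn, he | he⟩ | ⟨n, hn, -, he⟩ | ⟨n, hn, he⟩
  all_goals simp only [Prod.mk.injEq] at he
  all_goals try omega
  -- only the Fibonacci family is left
  obtain ⟨rfl, rfl, rfl, rfl⟩ := he
  obtain ⟨k, rfl⟩ : ∃ k, n = k + 4 := ⟨n - 4, by omega⟩
  have hrec : Nat.fib (k + 5) = Nat.fib (k + 3) + Nat.fib (k + 4) := Nat.fib_add_two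
  have htwo : 2 ≤ Nat.fib (k + 3) := Nat.fib_mono (show 3 ≤ k + 3 by omega)
  have hlt : Nat.fib (k + 3) < Nat.fib (k + 4) := Nat.fib_lt_fib_succ (by omega)
  have hle : Nat.fib (k + 4) ≤ 2 * Nat.fib (k + 3) := Nat.fib_succ_le_two_mul (by omega)
  rw [show k + 4 + 1 = k + 5 by omega, show k + 4 - 1 = k + 3 by omega]
  omega

lemma eq_of_ne_add_one {P Q R R' S : ℤ} (hPQ : P ≠ Q + 1)
    (h : LeeFamily P Q R S) (h' : LeeFamily P Q R' S) : R = R' := by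
  rcases h.cases_linear with h | h | h | h | h | h | h <;>
    rcases h'.cases_linear with h' | h' | h' | h' | h' | h' | h' <;>
    omega

lemma cases_of_eq_add_one {P Q R S : ℤ} (hPQ : P = Q + 1) (h : LeeFamily P Q R S) :
    (R = Q ∧ 2 ≤ Q) ∨ (R = Q + 1 ∧ S = -1) := by
  rcases h.cases_linear with h | h | h | h | h | h | h <;> omega

end LeeFamily

theorem consecutive_lee_families_general (p q R s : ℤ)
    (h1 : LeeFamily p q R s) (h2 : LeeFamily p q (R+1) s) :
    s = -1 ∧ ∃ N : ℤ, 2 ≤ N ∧ p = N + 1 ∧ q = N ∧ R = N := by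
  have hpq : p = q + 1 := by
    by_contra hpq
    exact (lt_add_one R).ne (h1.eq_of_ne_add_one hpq h2)
  have hR := h1.cases_of_eq_add_one hpq
  have hR' := h2.cases_of_eq_add_one hpq
  exact ⟨by omega, q, by omega, hpq, by omega⟩

/-- If `(p, q, R, s)` and `(p, q, R+1, s)` both belong to Lee's seven families,
then `s = -1` and `(p, q, R) = (N+1, N, N)` for some `N ≥ 2`. -/
theorem consecutive_lee_families (p q R s : ℤ) (hR : 2 ≤ R) (hs : s ≠ 0)
    (h1 : LeeFamily p q R s) (h2 : LeeFamily p q (R+1) s) :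
    s = -1 ∧ ∃ N : ℤ, 2 ≤ N ∧ p = N + 1 ∧ q = N ∧ R = N :=
  consecutive_lee_families_general p q R s h1 h2
end

section
/- Let p', q', s be integers with gcd(p', q') = 1, 1 ≤ q' < p', s < 0, and p'·q' = -4s. If the pair (p', q') gives an unknotted torus knot, i.e., q' = 1, and the quadruple (p', 1, 2, s) lies in one of Lee's seven families, then s = -1 and p' = 4. -/
/-- Only the families `(m n ± 1, n, n, -m)` have `S ≠ -1`, and there `Q = n ≥ 2`. -/
theorem LeeFamily.fourth_eq_neg_one_of_lt_two {P Q R S : ℤ} (h : LeeFamily P Q R S)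
    (hQ : Q < 2) : S = -1 := by
  rcases h with ⟨n, -, h⟩ | ⟨n, -, h⟩ | ⟨m, n, -, hn, h | h⟩ | ⟨n, -, h⟩ |
      ⟨n, -, h | h⟩ | ⟨n, -, -, h⟩ | ⟨n, -, h⟩ <;>
    simp only [Prod.mk.injEq] at h <;> omega

theorem case_r_three_general (p' q' s : ℤ)
    (hpq : p' * q' = -(4 * s)) (hq : q' = 1)
    (hLee : LeeFamily p' 1 2 s) :
    s = -1 ∧ p' = 4 := by
  have hs : s = -1 := hLee.fourth_eq_neg_one_of_lt_two (by norm_num)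
  subst hq hs
  exact ⟨rfl, by simpa using hpq⟩

/-- Case 4 (r = 3) of Proposition 3.2: the constraints force `s = -1` and `p' = 4`. -/
theorem case_r_three (p' q' s : ℤ) (hgcd : Int.gcd p' q' = 1)
    (hq1 : 1 ≤ q') (hqp : q' < p') (hs : s < 0)
    (hpq : p' * q' = -(4 * s)) (hq : q' = 1)
    (hLee : LeeFamily p' 1 2 s) :
    s = -1 ∧ p' = 4 :=
  case_r_three_general p' q' s hpq hq hLee
end
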